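/- arXiv:2506.23087 — 3 statements merged into one kernel-verified Lean document; each statement's English description precedes it below -/
import Mathlib

section
/- If B is a reflexive Banach space, M : B → ℝ^N is a continuous linear map, F : ℝ^N → (-∞, +∞] is a proper, convex, coercive, lower semicontinuous functional, and b > 0, then the functional 𝓕(u) = F(M u) + b‖u‖_B attains its infimum on B, i.e. there exists u₀ ∈ B with 𝓕(u₀) = inf_{u ∈ B} 𝓕(u). -/
open Metric NormedSpace Set Bornology

/-!
Work in the weak topology of `B`. There `u ↦ F (M u)` is lower semicontinuous because `M` has
finite rank and is therefore weakly continuous into `ℝ^N`, and `u ↦ ‖u‖` is weakly lower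
semicontinuous because closed balls are convex. Since `F` is bounded below and `b > 0`, the
sublevel sets of the functional are bounded; being weakly closed, they are weakly compact in a
reflexive space (Banach–Alaoglu in the bidual), so the functional attains its minimum there.
-/

theorem LowerSemicontinuous.exists_forall_le_of_isCompact_sublevel {X β : Type*}
    [TopologicalSpace X] [LinearOrder β] {f : X → β} (hf : LowerSemicontinuous f) (x₁ : X)
    (hK : IsCompact {x | f x ≤ f x₁}) : ∃ x₀, ∀ x, f x₀ ≤ f x := by
  obtain ⟨x₀, -, hx₀⟩ :=
    LowerSemicontinuousOn.exists_isMinOn ⟨x₁, le_refl (f x₁)⟩ hK (hf.lowerSemicontinuousOn _)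
  refine ⟨x₀, fun x => ?_⟩
  by_cases hx : f x ≤ f x₁
  · exact hx₀ hx
  · exact (hx₀ (le_refl (f x₁))).trans (not_le.1 hx).le

theorem LowerSemicontinuous.exists_coe_le_of_coe_le_of_norm_ge {E : Type*}
    [SeminormedAddCommGroup E] [ProperSpace E] {F : E → EReal} (hF : LowerSemicontinuous F)
    (hF_ne_bot : ∀ x, F x ≠ ⊥) {C R : ℝ} (hR : ∀ x, R ≤ ‖x‖ → (C : EReal) ≤ F x) :
    ∃ m : ℝ, ∀ x, (m : EReal) ≤ F x := by
  obtain ⟨x₀, -, hx₀⟩ := LowerSemicontinuousOn.exists_isMinOn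
    (nonempty_closedBall.2 (le_max_right R 0)) (isCompact_closedBall (0 : E) (max R 0))
    (hF.lowerSemicontinuousOn _)
  refine ⟨min (F x₀).toReal C, fun x => ?_⟩
  rcases le_or_gt ‖x‖ (max R 0) with hx | hx
  · calc ((min (F x₀).toReal C : ℝ) : EReal) ≤ (F x₀).toReal := EReal.coe_le_coe (min_le_left _ _)
      _ ≤ F x₀ := EReal.coe_toReal_le (hF_ne_bot x₀)
      _ ≤ F x := hx₀ (mem_closedBall_zero_iff.2 hx)
  · exact (EReal.coe_le_coe (min_le_right _ _)).trans (hR x ((le_max_left R 0).trans hx.le))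

theorem isBounded_setOf_add_mul_norm_le {E : Type*} [SeminormedAddCommGroup E]
    {g : E → EReal} {m b : ℝ} (hm : ∀ u, (m : EReal) ≤ g u) (hb : 0 < b) {c : EReal}
    (hc : c ≠ ⊤) : IsBounded {u | g u + ((b * ‖u‖ : ℝ) : EReal) ≤ c} := by
  refine isBounded_iff_forall_norm_le.2 ⟨(c.toReal - m) / b, fun u hu => ?_⟩
  have : ((m + b * ‖u‖ : ℝ) : EReal) ≤ c.toReal :=
    calc ((m + b * ‖u‖ : ℝ) : EReal) = m + ((b * ‖u‖ : ℝ) : EReal) := EReal.coe_add _ _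
      _ ≤ g u + ((b * ‖u‖ : ℝ) : EReal) := add_le_add_left (hm u) _
      _ ≤ c := hu
      _ ≤ c.toReal := EReal.le_coe_toReal hc
  rw [le_div_iff₀ hb]
  linarith [EReal.coe_le_coe_iff.1 this]

section WeakTopology

variable {𝕜 : Type*} [RCLike 𝕜] {E : Type*} [NormedAddCommGroup E] [NormedSpace 𝕜 E]

theorem ContinuousLinearMap.continuous_comp_toWeakSpace_symm {F : Type*} [NormedAddCommGroup F]
    [NormedSpace 𝕜 F] [FiniteDimensional 𝕜 F] (f : E →L[𝕜] F) :
    Continuous (f ∘ (toWeakSpace 𝕜 E).symm) := by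
  have : FiniteDimensional 𝕜 (WeakSpace 𝕜 F) := ‹FiniteDimensional 𝕜 F›
  exact ((toWeakSpace 𝕜 F).symm.toLinearMap.continuous_of_finiteDimensional).comp
    (WeakSpace.map f).continuous

theorem lowerSemicontinuous_norm_toWeakSpace_symm [NormedSpace ℝ E] [IsScalarTower ℝ 𝕜 E] :
    LowerSemicontinuous (fun u : WeakSpace 𝕜 E => ‖(toWeakSpace 𝕜 E).symm u‖) := by
  refine lowerSemicontinuous_iff_isClosed_preimage.2 fun r => ?_
  have hball : (fun u : WeakSpace 𝕜 E => ‖(toWeakSpace 𝕜 E).symm u‖) ⁻¹' Iic r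
      = toWeakSpace 𝕜 E '' closedBall 0 r := by
    ext u
    simp [LinearEquiv.image_eq_preimage_symm]
  rw [hball, ← isClosed_closedBall.closure_eq, (convex_closedBall (0 : E) r).toWeakSpace_closure 𝕜]
  exact isClosed_closure

theorem isCompact_of_isBounded_of_isClosed_of_reflexive
    (hrefl : Function.Surjective (inclusionInDoubleDual 𝕜 E)) {S : Set (WeakSpace 𝕜 E)}
    (hb : IsBounded (toWeakSpace 𝕜 E ⁻¹' S)) (hS : IsClosed S) : IsCompact S := by
  have hsurj : Function.Surjective (inclusionInDoubleDualWeak 𝕜 E) :=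
    StrongDual.toWeakDual.surjective.comp hrefl
  simpa only [hS.closure_eq] using
    isCompact_closure_of_isBounded 𝕜 E S hb (hsurj.range_eq ▸ subset_univ _)

end WeakTopology

theorem exists_minimizer_tikhonov_general
    (B : Type*) [NormedAddCommGroup B] [NormedSpace ℝ B]
    (hrefl : Function.Surjective (NormedSpace.inclusionInDoubleDual ℝ B))
    (N : ℕ) (M : B →L[ℝ] (EuclideanSpace ℝ (Fin N)))
    (F : EuclideanSpace ℝ (Fin N) → EReal)
    (hF_ne_bot : ∀ x, F x ≠ ⊥)
    (hF_coercive : ∀ C : ℝ, ∃ R : ℝ, ∀ x, R ≤ ‖x‖ → (C : EReal) ≤ F x)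
    (hF_lsc : LowerSemicontinuous F)
    (b : ℝ) (hb : 0 < b) :
    ∃ u₀ : B, ∀ u : B,
      F (M u₀) + ((b * ‖u₀‖ : ℝ) : EReal) ≤ F (M u) + ((b * ‖u‖ : ℝ) : EReal) := by
  by_cases htop : ∀ u, F (M u) = ⊤
  · exact ⟨0, fun u => by simp only [htop, EReal.top_add_coe, le_refl]⟩
  obtain ⟨u₁, hu₁⟩ := not_forall.1 htop
  obtain ⟨R, hR⟩ := hF_coercive 0
  obtain ⟨m, hm⟩ := hF_lsc.exists_coe_le_of_coe_le_of_norm_ge hF_ne_bot hR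
  let Φ : WeakSpace ℝ B → EReal := fun u =>
    F (M ((toWeakSpace ℝ B).symm u)) + ((b * ‖(toWeakSpace ℝ B).symm u‖ : ℝ) : EReal)
  have hΦ : LowerSemicontinuous Φ :=
    (hF_lsc.comp M.continuous_comp_toWeakSpace_symm).add'
      ((continuous_coe_real_ereal.comp (continuous_const_mul b)).comp_lowerSemicontinuous
        lowerSemicontinuous_norm_toWeakSpace_symm
        fun _ _ h => EReal.coe_le_coe (mul_le_mul_of_nonneg_left h hb.le))
      fun _ => EReal.continuousAt_add (Or.inr (EReal.coe_ne_bot _)) (Or.inr (EReal.coe_ne_top _))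
  have hΦu₁ : Φ u₁ ≠ ⊤ := EReal.add_ne_top hu₁ (EReal.coe_ne_top _)
  exact hΦ.exists_forall_le_of_isCompact_sublevel u₁
    (isCompact_of_isBounded_of_isClosed_of_reflexive hrefl
      (isBounded_setOf_add_mul_norm_le (fun u => hm (M u)) hb hΦu₁) (hΦ.isClosed_preimage _))

/-- If `B` is a reflexive Banach space, `M : B → ℝ^N` a continuous linear map,
`F : ℝ^N → (-∞, +∞]` a proper, convex, coercive, lower semicontinuous functional and `b > 0`,
then the functional `𝓕 u = F (M u) + b‖u‖` attains its infimum on `B`. -/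
theorem exists_minimizer_tikhonov
    (B : Type*) [NormedAddCommGroup B] [NormedSpace ℝ B] [CompleteSpace B]
    (hrefl : Function.Surjective (NormedSpace.inclusionInDoubleDual ℝ B))
    (N : ℕ) (M : B →L[ℝ] (EuclideanSpace ℝ (Fin N)))
    (F : EuclideanSpace ℝ (Fin N) → EReal)
    (hF_ne_bot : ∀ x, F x ≠ ⊥)
    (hF_proper : ∃ x, F x ≠ ⊤)
    (hF_convex : ∀ x y : EuclideanSpace ℝ (Fin N), ∀ a c : ℝ, 0 ≤ a → 0 ≤ c → a + c = 1 →
      F (a • x + c • y) ≤ (a : EReal) * F x + (c : EReal) * F y)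
    (hF_coercive : ∀ C : ℝ, ∃ R : ℝ, ∀ x, R ≤ ‖x‖ → (C : EReal) ≤ F x)
    (hF_lsc : LowerSemicontinuous F)
    (b : ℝ) (hb : 0 < b) :
    ∃ u₀ : B, ∀ u : B,
      F (M u₀) + ((b * ‖u₀‖ : ℝ) : EReal) ≤ F (M u) + ((b * ‖u‖ : ℝ) : EReal) :=
  exists_minimizer_tikhonov_general B hrefl N M F hF_ne_bot hF_coercive hF_lsc b hb
end

section
/- Let B be a reflexive Banach space, {v_j}_{j∈ℕ} ⊂ B* linearly independent with dense linear span and ‖v_j‖ ≤ 1, M_N u = (⟨v_1,u⟩,…,⟨v_N,u⟩), h⁰ ∈ ℓ^∞, F_N(g) = ‖g − Π_N h⁰‖_{ℓ^∞(ℝ^N)}, and b_N > 0 with b_N → 0. Suppose for each N a minimizer u_N of 𝓕_N(u) = F_N(M_N u) + b_N‖u‖_B exists. If the equation ⟨v_j, u⟩ = h⁰_j for all j ∈ ℕ admits a solution u_∞ ∈ B, then 𝓕_N(u_N) ≤ ‖u_∞‖_B · b_N for all N, and the sequence {u_N} converges weakly in B to u_∞. -/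
/-!
Testing the minimality of `u_N` against the exact solution `u_∞`, whose residual vanishes, gives
`𝓕_N(u_N) ≤ b_N ‖u_∞‖`. This single bound yields `‖u_N‖ ≤ ‖u_∞‖` and makes every residual
`|⟨v_j, u_N⟩ - h⁰_j|` (for `j < N`) at most `b_N ‖u_∞‖ → 0`. Hence `⟨g, u_N⟩ → ⟨g, u_∞⟩` for `g` in
the span of the `v_j`, and since the `u_N` are bounded this extends to the closure of the span,
which is the whole dual.
-/

open Filter Topology
open scoped NNReal

section WeakConvergence

variable {𝕜 E ι : Type*} [NontriviallyNormedField 𝕜] [SeminormedAddCommGroup E] [NormedSpace 𝕜 E]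
  {l : Filter ι} {x : ι → E} {y : E}

theorem tendsto_apply_of_mem_span {S : Set (StrongDual 𝕜 E)}
    (hS : ∀ g ∈ S, Tendsto (fun i ↦ g (x i)) l (𝓝 (g y))) {g : StrongDual 𝕜 E}
    (hg : g ∈ Submodule.span 𝕜 S) : Tendsto (fun i ↦ g (x i)) l (𝓝 (g y)) := by
  induction hg using Submodule.span_induction with
  | mem g hg => exact hS g hg
  | zero => exact tendsto_const_nhds
  | add g g' _ _ hg hg' => exact hg.add hg'
  | smul c g _ hg => exact hg.const_smul c

/-- The evaluations `g ↦ g (x i)` are `C`-Lipschitz, hence equicontinuous, so the functionals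
along which they converge form a closed set. -/
theorem tendsto_apply_of_dense {C : ℝ≥0} (hx : ∀ i, ‖x i‖₊ ≤ C) {S : Set (StrongDual 𝕜 E)}
    (hS : Dense S) (hconv : ∀ g ∈ S, Tendsto (fun i ↦ g (x i)) l (𝓝 (g y)))
    (f : StrongDual 𝕜 E) : Tendsto (fun i ↦ f (x i)) l (𝓝 (f y)) := by
  have hlip : ∀ i, LipschitzWith C fun g : StrongDual 𝕜 E ↦ g (x i) := fun i ↦
    LipschitzWith.of_dist_le_mul fun g g' ↦ by
      calc dist (g (x i)) (g' (x i)) = ‖(g - g') (x i)‖ := by rw [dist_eq_norm]; rfl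
        _ ≤ ‖g - g'‖ * ‖x i‖ := (g - g').le_opNorm (x i)
        _ ≤ C * dist g g' := by
          rw [dist_eq_norm, mul_comm]
          exact mul_le_mul_of_nonneg_right (hx i) (norm_nonneg _)
  have hclosed : IsClosed {g : StrongDual 𝕜 E | Tendsto (fun i ↦ g (x i)) l (𝓝 (g y))} :=
    (LipschitzWith.uniformEquicontinuous _ C hlip).equicontinuous.isClosed_setOfPred_tendsto
      (ContinuousLinearMap.apply 𝕜 𝕜 y).continuous
  exact hclosed.closure_subset_iff.2 hconv (hS f)

end WeakConvergence

theorem tendsto_of_iSup_fin_abs_sub_le {a : ℕ → ℕ → ℝ} {c ε : ℕ → ℝ}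
    (hε : Tendsto ε atTop (𝓝 0)) (h : ∀ N, ⨆ j : Fin N, |a N j - c j| ≤ ε N) (j : ℕ) :
    Tendsto (fun N ↦ a N j) atTop (𝓝 (c j)) := by
  rw [tendsto_iff_norm_sub_tendsto_zero]
  refine squeeze_zero' (Eventually.of_forall fun _ ↦ norm_nonneg _) ?_ hε
  filter_upwards [eventually_gt_atTop j] with N hN
  exact (Finite.le_ciSup (fun i : Fin N ↦ |a N i - c i|) ⟨j, hN⟩).trans (h N)

theorem tikhonov_minimizers_weak_convergence_general
    (B : Type*) [NormedAddCommGroup B] [NormedSpace ℝ B]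
    (v : ℕ → StrongDual ℝ B)
    (hv_dense : Dense (Submodule.span ℝ (Set.range v) : Set (StrongDual ℝ B)))
    (h0 : ℕ → ℝ)
    (b : ℕ → ℝ) (hb_pos : ∀ N, 0 < b N) (hb_lim : Tendsto b atTop (𝓝 0))
    (𝓕 : ℕ → B → ℝ)
    (h𝓕 : ∀ N u, 𝓕 N u = (⨆ j : Fin N, |v j u - h0 j|) + b N * ‖u‖)
    (uN : ℕ → B)
    (huN_min : ∀ N, ∀ u : B, 𝓕 N (uN N) ≤ 𝓕 N u)
    (uinf : B) (huinf : ∀ j, v j uinf = h0 j) :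
    (∀ N, 𝓕 N (uN N) ≤ ‖uinf‖ * b N) ∧
    (∀ f : StrongDual ℝ B, Tendsto (fun N => f (uN N)) atTop (𝓝 (f uinf))) := by
  have hbound : ∀ N, 𝓕 N (uN N) ≤ ‖uinf‖ * b N := fun N ↦ by
    simpa [h𝓕 N uinf, huinf, mul_comm] using huN_min N uinf
  have hsplit : ∀ N, (⨆ j : Fin N, |v j (uN N) - h0 j|) + b N * ‖uN N‖ ≤ ‖uinf‖ * b N :=
    fun N ↦ h𝓕 N (uN N) ▸ hbound N
  have hres_nonneg : ∀ N, 0 ≤ ⨆ j : Fin N, |v j (uN N) - h0 j| :=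
    fun N ↦ Real.iSup_nonneg fun _ ↦ abs_nonneg _
  have hres : ∀ N, ⨆ j : Fin N, |v j (uN N) - h0 j| ≤ ‖uinf‖ * b N := fun N ↦ by
    linarith [hsplit N, mul_nonneg (hb_pos N).le (norm_nonneg (uN N))]
  have hnorm : ∀ N, ‖uN N‖₊ ≤ ‖uinf‖₊ := fun N ↦ by
    have hle : b N * ‖uN N‖ ≤ b N * ‖uinf‖ := by linarith [hsplit N, hres_nonneg N]
    exact_mod_cast le_of_mul_le_mul_left hle (hb_pos N)
  have hv : ∀ j, Tendsto (fun N ↦ v j (uN N)) atTop (𝓝 (v j uinf)) := fun j ↦ by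
    rw [huinf j]
    exact tendsto_of_iSup_fin_abs_sub_le (a := fun N j ↦ v j (uN N))
      (by simpa using hb_lim.const_mul ‖uinf‖) hres j
  refine ⟨hbound, tendsto_apply_of_dense hnorm hv_dense fun g ↦ tendsto_apply_of_mem_span ?_⟩
  rintro _ ⟨j, rfl⟩
  exact hv j

/-- Convergence of Tikhonov minimizers. Let `B` be a reflexive Banach space, `{v j} ⊆ B*`
linearly independent with dense span and `‖v j‖ ≤ 1`, `h⁰ ∈ ℓ^∞`, `b N > 0` with `b N → 0`,
and `𝓕 N u = ‖M_N u - Π_N h⁰‖_∞ + b N ‖u‖` with `M_N u = (⟨v j, u⟩)_{j<N}`. If `u_N` is a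
minimizer of `𝓕 N` for each `N` and the equation `⟨v j, u⟩ = h⁰ j` (all `j`) has a solution
`u_∞ ∈ B`, then `𝓕 N (u_N) ≤ ‖u_∞‖ * b N` for all `N` and `u_N ⇀ u_∞` weakly in `B`. -/
theorem tikhonov_minimizers_weak_convergence
    (B : Type*) [NormedAddCommGroup B] [NormedSpace ℝ B] [CompleteSpace B]
    (hrefl : Function.Surjective (NormedSpace.inclusionInDoubleDual ℝ B))
    (v : ℕ → StrongDual ℝ B)
    (hv_indep : LinearIndependent ℝ v)
    (hv_dense : Dense (Submodule.span ℝ (Set.range v) : Set (StrongDual ℝ B)))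
    (hv_bound : ∀ j, ‖v j‖ ≤ 1)
    (h0 : ℕ → ℝ) (hh0 : ∃ C : ℝ, ∀ j, |h0 j| ≤ C)
    (b : ℕ → ℝ) (hb_pos : ∀ N, 0 < b N) (hb_lim : Tendsto b atTop (𝓝 0))
    (𝓕 : ℕ → B → ℝ)
    (h𝓕 : ∀ N u, 𝓕 N u = (⨆ j : Fin N, |v j u - h0 j|) + b N * ‖u‖)
    (uN : ℕ → B)
    (huN_min : ∀ N, ∀ u : B, 𝓕 N (uN N) ≤ 𝓕 N u)
    (uinf : B) (huinf : ∀ j, v j uinf = h0 j) :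
    (∀ N, 𝓕 N (uN N) ≤ ‖uinf‖ * b N) ∧
    (∀ f : StrongDual ℝ B, Tendsto (fun N => f (uN N)) atTop (𝓝 (f uinf))) :=
  tikhonov_minimizers_weak_convergence_general B v hv_dense h0 b hb_pos hb_lim 𝓕 h𝓕 uN huN_min uinf
    huinf
end

section
/- Conversely, in the setting above, if there is a constant C₀ > 0 such that 𝓕_N(u_N) ≤ C₀ b_N for all N, then the equation ⟨v_j, u⟩ = h⁰_j for all j ∈ ℕ is solvable in B. -/
open Filter Topology

/-!
The bound `𝓕 N (u_N) ≤ C₀ b_N` controls both terms of the functional: dividing the penalty term by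
`b_N > 0` gives `‖u_N‖ ≤ C₀`, and the residual satisfies `|v j (u_N) - h⁰ j| ≤ C₀ b_N → 0` for
`j < N`. In a reflexive space the bounded sequence `u_N` has a weak cluster point `u`
(Banach–Alaoglu in the double dual), and `v j u` is then a cluster point of the convergent sequence
`v j (u_N)`, hence equals its limit `h⁰ j`.
-/

namespace NormedSpace

variable {𝕜 E ι : Type*} [RCLike 𝕜] [NormedAddCommGroup E] [NormedSpace 𝕜 E]

theorem exists_forall_mapClusterPt_apply_of_norm_le
    (hrefl : Function.Surjective (inclusionInDoubleDual 𝕜 E)) {l : Filter ι} [NeBot l]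
    {u : ι → E} {C : ℝ} (hu : ∀ i, ‖u i‖ ≤ C) :
    ∃ w : E, ∀ f : StrongDual 𝕜 E, MapClusterPt (f w) l fun i ↦ f (u i) := by
  let U : ι → WeakDual 𝕜 (StrongDual 𝕜 E) := fun i ↦ inclusionInDoubleDual 𝕜 E (u i)
  have hU : ∀ i, U i ∈ WeakDual.toStrongDual ⁻¹' Metric.closedBall 0 C := fun i ↦ by
    rw [Set.mem_preimage, Metric.mem_closedBall]
    exact (dist_zero_right (WeakDual.toStrongDual (U i))).trans_le
      ((double_dual_bound 𝕜 E (u i)).trans (hu i))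
  obtain ⟨x, -, hx⟩ := (WeakDual.isCompact_closedBall 0 C).exists_mapClusterPt (f := l) (u := U)
    (tendsto_principal.2 (Eventually.of_forall hU))
  obtain ⟨w, hw⟩ := hrefl (WeakDual.toStrongDual x)
  refine ⟨w, fun f ↦ ?_⟩
  have hxf : x f = f w := by rw [← dual_def 𝕜 E w f, hw]; rfl
  exact hxf ▸ hx.continuousAt_comp (WeakDual.eval_continuous f).continuousAt

theorem exists_forall_apply_eq_of_tendsto
    (hrefl : Function.Surjective (inclusionInDoubleDual 𝕜 E)) {κ : Type*}
    (ℓ : κ → StrongDual 𝕜 E) (y : κ → 𝕜) {l : Filter ι} [NeBot l] {u : ι → E} {C : ℝ}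
    (hu : ∀ i, ‖u i‖ ≤ C) (hlim : ∀ j, Tendsto (fun i ↦ ℓ j (u i)) l (𝓝 (y j))) :
    ∃ w : E, ∀ j, ℓ j w = y j := by
  obtain ⟨w, hw⟩ := exists_forall_mapClusterPt_apply_of_norm_le (l := l) hrefl hu
  exact ⟨w, fun j ↦ eq_of_nhds_neBot ((hw (ℓ j)).clusterPt.mono (hlim j))⟩

end NormedSpace

theorem tendsto_of_iSup_abs_sub_le {x : ℕ → ℕ → ℝ} {y : ℕ → ℝ} {ε : ℕ → ℝ}
    (hε : Tendsto ε atTop (𝓝 0)) (h : ∀ N, (⨆ j : Fin N, |x N j - y j|) ≤ ε N) (j : ℕ) :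
    Tendsto (fun N ↦ x N j) atTop (𝓝 (y j)) := by
  rw [tendsto_iff_dist_tendsto_zero]
  refine squeeze_zero' (Eventually.of_forall fun N ↦ dist_nonneg) ?_ hε
  filter_upwards [eventually_gt_atTop j] with N hjN
  calc dist (x N j) (y j) = |x N j - y j| := Real.dist_eq _ _
    _ ≤ ⨆ i : Fin N, |x N i - y i| :=
        le_ciSup (f := fun i : Fin N ↦ |x N i - y i|) (Finite.bddAbove_range _) ⟨j, hjN⟩
    _ ≤ ε N := h N

theorem tikhonov_bound_implies_solvable_general
    (B : Type*) [NormedAddCommGroup B] [NormedSpace ℝ B]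
    (hrefl : Function.Surjective (NormedSpace.inclusionInDoubleDual ℝ B))
    (v : ℕ → StrongDual ℝ B)
    (h0 : ℕ → ℝ)
    (b : ℕ → ℝ) (hb_pos : ∀ N, 0 < b N) (hb_lim : Tendsto b atTop (𝓝 0))
    (𝓕 : ℕ → B → ℝ)
    (h𝓕 : ∀ N u, 𝓕 N u = (⨆ j : Fin N, |v j u - h0 j|) + b N * ‖u‖)
    (uN : ℕ → B)
    (C₀ : ℝ)
    (hbound : ∀ N, 𝓕 N (uN N) ≤ C₀ * b N) :
    ∃ u : B, ∀ j, v j u = h0 j := by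
  have hbound' : ∀ N, (⨆ j : Fin N, |v j (uN N) - h0 j|) + b N * ‖uN N‖ ≤ C₀ * b N :=
    fun N ↦ h𝓕 N (uN N) ▸ hbound N
  have hresid_nonneg : ∀ N, 0 ≤ ⨆ j : Fin N, |v j (uN N) - h0 j| :=
    fun N ↦ Real.iSup_nonneg fun j ↦ abs_nonneg _
  have hnorm : ∀ N, ‖uN N‖ ≤ C₀ := fun N ↦
    le_of_mul_le_mul_left (by linarith [hbound' N, hresid_nonneg N]) (hb_pos N)
  have hresid : ∀ N, (⨆ j : Fin N, |v j (uN N) - h0 j|) ≤ C₀ * b N := fun N ↦ by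
    nlinarith [hbound' N, hb_pos N, norm_nonneg (uN N)]
  have hCb : Tendsto (fun N ↦ C₀ * b N) atTop (𝓝 0) := by simpa using hb_lim.const_mul C₀
  exact NormedSpace.exists_forall_apply_eq_of_tendsto hrefl v h0 hnorm
    (tendsto_of_iSup_abs_sub_le hCb hresid)

/-- Converse direction. In the same Tikhonov setting (`B` reflexive, `{v j}` linearly
independent with dense span, `‖v j‖ ≤ 1`, `h⁰ ∈ ℓ^∞`, `b N > 0`, `b N → 0`, `u_N` minimizers
of `𝓕 N u = ‖M_N u - Π_N h⁰‖_∞ + b N ‖u‖`): if there is `C₀ > 0` with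
`𝓕 N (u_N) ≤ C₀ * b N` for all `N`, then the equation `⟨v j, u⟩ = h⁰ j` (for all `j ∈ ℕ`) is
solvable in `B`. -/
theorem tikhonov_bound_implies_solvable
    (B : Type*) [NormedAddCommGroup B] [NormedSpace ℝ B] [CompleteSpace B]
    (hrefl : Function.Surjective (NormedSpace.inclusionInDoubleDual ℝ B))
    (v : ℕ → StrongDual ℝ B)
    (hv_indep : LinearIndependent ℝ v)
    (hv_dense : Dense (Submodule.span ℝ (Set.range v) : Set (StrongDual ℝ B)))
    (hv_bound : ∀ j, ‖v j‖ ≤ 1)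
    (h0 : ℕ → ℝ) (hh0 : ∃ C : ℝ, ∀ j, |h0 j| ≤ C)
    (b : ℕ → ℝ) (hb_pos : ∀ N, 0 < b N) (hb_lim : Tendsto b atTop (𝓝 0))
    (𝓕 : ℕ → B → ℝ)
    (h𝓕 : ∀ N u, 𝓕 N u = (⨆ j : Fin N, |v j u - h0 j|) + b N * ‖u‖)
    (uN : ℕ → B)
    (huN_min : ∀ N, ∀ u : B, 𝓕 N (uN N) ≤ 𝓕 N u)
    (C₀ : ℝ) (hC₀ : 0 < C₀)
    (hbound : ∀ N, 𝓕 N (uN N) ≤ C₀ * b N) :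
    ∃ u : B, ∀ j, v j u = h0 j :=
  tikhonov_bound_implies_solvable_general B hrefl v h0 b hb_pos hb_lim 𝓕 h𝓕 uN C₀ hbound
end
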